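/- Define Φ∨ on the model of L(ℂPⁿ) by Φ∨([x^k ⊗ x̄^ε ȳ^s] ⊗ [x^l ⊗ x̄^{ε'} ȳ^{s'}]) = 0 if k + l > 0, and = [xⁿ ⊗ x̄^{ε+ε'} ȳ^{s+s'}] if k = l = 0. Then with P∨ the dual loop product given by P∨([xⁿ ⊗ ȳ^t]) involving Σ_j C(t,j) xⁿ⊗ȳ^j ⊗ xⁿ⊗ȳ^{t−j}, the composite P∨ ∘ Φ∨ is nonzero; explicitly (P∨ ∘ Φ∨)([1 ⊗ ȳ^s] ⊗ [1 ⊗ ȳ^{s'}]) = Σ_{j=0}^{s+s'} C(s+s', j) [xⁿ ⊗ ȳ^j] ⊗ [xⁿ ⊗ ȳ^{s+s'−j}] ≠ 0. -/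

import Mathlib

set_option synthInstance.maxHeartbeats 1000000
set_option maxHeartbeats 2000000

open Polynomial
open scoped TensorProduct

/-- The truncated polynomial algebra `H*(ℂPⁿ; k) = k[x]/(x^{n+1})`. -/
noncomputable abbrev CPH (k : Type*) [Field k] (n : ℕ) :=
  Polynomial k ⧸ Ideal.span {(X : Polynomial k) ^ (n + 1)}

/-- The Sullivan model of `L ℂPⁿ`: `C[ȳ] ⊕ C[ȳ]·x̄` with `C = k[x]/(x^{n+1})`. -/
noncomputable abbrev LCP (k : Type*) [Field k] (n : ℕ) :=
  DualNumber (Polynomial (CPH k n))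

set_option synthInstance.maxHeartbeats 1000000 in
noncomputable instance LCP.instCommRing {k : Type*} [Field k] {n : ℕ} : CommRing (LCP k n) :=
  @TrivSqZeroExt.commRing _ _ _ _ _ _ ⟨fun r m => mul_comm m r⟩

set_option synthInstance.maxHeartbeats 1000000 in
set_option maxHeartbeats 2000000 in
noncomputable instance LCP.instAlgebra {k : Type*} [Field k] {n : ℕ} : Algebra k (LCP k n) :=
  inferInstance

/-- The class `x ∈ k[x]/(x^{n+1})`. -/
noncomputable def xcl (k : Type*) [Field k] (n : ℕ) : CPH k n :=
  Ideal.Quotient.mk _ X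

/-- The monomial `x^kk · x̄^ε · ȳ^s` in the model of `L ℂPⁿ`. -/
noncomputable def eMon (k : Type*) [Field k] (n : ℕ) (ε : Bool) (s kk : ℕ) : LCP k n :=
  if ε then TrivSqZeroExt.inr (Polynomial.C (xcl k n ^ kk) * X ^ s)
  else TrivSqZeroExt.inl (Polynomial.C (xcl k n ^ kk) * X ^ s)


/-!
The coproduct sends `ȳ^s ⊗ ȳ^{s'}` to `xⁿ ȳ^{s+s'}`, which the product expands binomially. The
expansion is nonzero: pick `φ` on `k[x]/(x^{n+1})` with `φ(xⁿ) = 1`; then the functional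
`a ⊗ b ↦ φ(coeff of ȳ⁰ in a) · φ(coeff of ȳ^{s+s'} in b)` is `1` on the `j = 0` term
`xⁿ ⊗ xⁿ ȳ^{s+s'}` and vanishes on all the others.
-/

theorem xcl_pow_ne_zero {k : Type*} [Field k] {n m : ℕ} (hm : m ≤ n) : xcl k n ^ m ≠ 0 := by
  rw [xcl, ← map_pow, Ne, Ideal.Quotient.eq_zero_iff_mem, Ideal.mem_span_singleton,
    Polynomial.X_pow_dvd_iff]
  intro h
  simpa [Polynomial.coeff_X_pow] using h m (by omega)

noncomputable def evenCoeffDual {k : Type*} [Field k] {n : ℕ} (j : ℕ)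
    (φ : Module.Dual k (CPH k n)) : Module.Dual k (LCP k n) :=
  φ ∘ₗ (Polynomial.lcoeff (CPH k n) j).restrictScalars k ∘ₗ
    (TrivSqZeroExt.fstHom k (Polynomial (CPH k n)) (Polynomial (CPH k n))).toLinearMap

theorem evenCoeffDual_eMon_false {k : Type*} [Field k] {n : ℕ} (i j m : ℕ)
    (φ : Module.Dual k (CPH k n)) :
    evenCoeffDual i φ (eMon k n false j m) = if i = j then φ (xcl k n ^ m) else 0 := by
  simp only [evenCoeffDual, eMon, Bool.false_eq_true, if_false, LinearMap.comp_apply,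
    AlgHom.toLinearMap_apply, TrivSqZeroExt.fstHom_apply, TrivSqZeroExt.fst_inl,
    LinearMap.coe_restrictScalars, Polynomial.lcoeff_apply, Polynomial.coeff_C_mul_X_pow]
  split_ifs <;> simp

theorem sum_smul_eMon_tmul_eMon_ne_zero {k : Type*} [Field k] (n t : ℕ) (c : ℕ → k)
    (hc : c 0 ≠ 0) :
    ∑ j ∈ Finset.range (t + 1), c j • (eMon k n false j n ⊗ₜ[k] eMon k n false (t - j) n) ≠ 0 := by
  obtain ⟨φ, hφ⟩ := Module.Projective.exists_dual_eq_one k (xcl_pow_ne_zero (k := k) le_rfl)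
  let detect : LCP k n ⊗[k] LCP k n →ₗ[k] k :=
    TensorProduct.lid k k ∘ₗ TensorProduct.map (evenCoeffDual 0 φ) (evenCoeffDual t φ)
  have h_detect : detect (∑ j ∈ Finset.range (t + 1),
      c j • (eMon k n false j n ⊗ₜ[k] eMon k n false (t - j) n)) = c 0 := by
    rw [map_sum, Finset.sum_eq_single 0]
    · simp [detect, evenCoeffDual_eMon_false, hφ]
    · intro j _ hj
      simp [detect, evenCoeffDual_eMon_false, Ne.symm hj]
    · simp
  intro h
  exact hc (h_detect ▸ h ▸ map_zero detect)

theorem cpn_coproduct_product_nontrivial_general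
    {k : Type*} [Field k] (n : ℕ)
    (Φ : LCP k n ⊗[k] LCP k n →ₗ[k] LCP k n)
    (hΦ : ∀ (ε ε' : Bool) (s s' kk ll : ℕ),
      Φ (eMon k n ε s kk ⊗ₜ[k] eMon k n ε' s' ll) =
        if 0 < kk + ll then 0
        else if ε && ε' then 0 else eMon k n (ε || ε') (s + s') n)
    (P : LCP k n →ₗ[k] LCP k n ⊗[k] LCP k n)
    (hP : ∀ t, P (eMon k n false t n) =
      ∑ j ∈ Finset.range (t + 1), ((t.choose j : k)) •
        (eMon k n false j n ⊗ₜ[k] eMon k n false (t - j) n)) :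
    ∀ s s',
      P (Φ (eMon k n false s 0 ⊗ₜ[k] eMon k n false s' 0)) =
        ∑ j ∈ Finset.range (s + s' + 1), (((s + s').choose j : k)) •
          (eMon k n false j n ⊗ₜ[k] eMon k n false (s + s' - j) n) ∧
      P (Φ (eMon k n false s 0 ⊗ₜ[k] eMon k n false s' 0)) ≠ 0 := by
  intro s s'
  have h_coproduct : Φ (eMon k n false s 0 ⊗ₜ[k] eMon k n false s' 0) =
      eMon k n false (s + s') n := by
    simpa using hΦ false false s s' 0 0
  rw [h_coproduct, hP]
  exact ⟨rfl, sum_smul_eMon_tmul_eMon_ne_zero n (s + s') _ (by simp)⟩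

/-- with `Φ = Φ∨` the dual loop coproduct given on the model of `L ℂPⁿ` by
`Φ∨(x^k x̄^ε ȳ^s ⊗ x^l x̄^{ε'} ȳ^{s'}) = 0` if `k + l > 0` and `= xⁿ x̄^{ε+ε'} ȳ^{s+s'}` if
`k = l = 0`, and `P = P∨` the dual loop product with
`P∨(xⁿ ȳ^t) = Σ_j C(t,j) xⁿȳ^j ⊗ xⁿȳ^{t−j}`, the composite `P∨ ∘ Φ∨` is nonzero;
explicitly `(P∨ ∘ Φ∨)(ȳ^s ⊗ ȳ^{s'}) = Σ_{j=0}^{s+s'} C(s+s', j) xⁿȳ^j ⊗ xⁿȳ^{s+s'−j} ≠ 0`. -/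
theorem cpn_coproduct_product_nontrivial
    {k : Type*} [Field k] [CharZero k] (n : ℕ) (hn : 1 ≤ n)
    (Φ : LCP k n ⊗[k] LCP k n →ₗ[k] LCP k n)
    (hΦ : ∀ (ε ε' : Bool) (s s' kk ll : ℕ),
      Φ (eMon k n ε s kk ⊗ₜ[k] eMon k n ε' s' ll) =
        if 0 < kk + ll then 0
        else if ε && ε' then 0 else eMon k n (ε || ε') (s + s') n)
    (P : LCP k n →ₗ[k] LCP k n ⊗[k] LCP k n)
    (hP : ∀ t, P (eMon k n false t n) =
      ∑ j ∈ Finset.range (t + 1), ((t.choose j : k)) •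
        (eMon k n false j n ⊗ₜ[k] eMon k n false (t - j) n)) :
    ∀ s s',
      P (Φ (eMon k n false s 0 ⊗ₜ[k] eMon k n false s' 0)) =
        ∑ j ∈ Finset.range (s + s' + 1), (((s + s').choose j : k)) •
          (eMon k n false j n ⊗ₜ[k] eMon k n false (s + s' - j) n) ∧
      P (Φ (eMon k n false s 0 ⊗ₜ[k] eMon k n false s' 0)) ≠ 0 :=
  cpn_coproduct_product_nontrivial_general n Φ hΦ P hP
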